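/- arXiv:1603.00903 — 2 statements merged into one kernel-verified Lean document; each statement's English description precedes it below -/
import Mathlib

section
/- Let a : ℝ with 0 ≤ a ≤ 1, and define ρ₁ := ((a : ℂ)/2) • (|0^q⟩⟨0^q| + |1^q⟩⟨1^q|) + (((1 - a : ℝ) : ℂ)/2) • (|2^q⟩⟨2^q| + |3^q⟩⟨3^q|). Then trace(Π_q * ρ₁) = 1/2. (This is the first case of the mixed-answer lemma: a reduced GHZ-like state on the wrong qudits projects onto the correct codespace with probability exactly one half.) -/
open Matrix

/-- Standard basis vector of the `q`-qudit space supported at the constant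
function `fun _ => u`. -/
def basisVec (q : ℕ) (u : Fin 4) : (Fin q → Fin 4) → ℂ :=
  fun x => if x = (fun _ => u) then 1 else 0

/-- The codespace projector `Π_q`. -/
noncomputable def codeProj (q : ℕ) : Matrix (Fin q → Fin 4) (Fin q → Fin 4) ℂ :=
  (1/2 : ℂ) •
    ((∑ u ∈ ({0,1} : Finset (Fin 4)), ∑ v ∈ ({0,1} : Finset (Fin 4)),
        vecMulVec (basisVec q u) (star (basisVec q v)))
      + (∑ w ∈ ({2,3} : Finset (Fin 4)), ∑ z ∈ ({2,3} : Finset (Fin 4)),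
        vecMulVec (basisVec q w) (star (basisVec q z))))

/-! Each `|u^q⟩⟨u^q|` is a matrix unit, so `trace (Π_q * |u^q⟩⟨u^q|)` is the diagonal entry of
`Π_q` at `u^q`. Since `q ≥ 1` the constant strings `u^q` are pairwise distinct, and `u` lies in
exactly one of the blocks `{0,1}`, `{2,3}`, so every such entry is `1/2`; the trace is then
`(a/2)(1/2 + 1/2) + ((1-a)/2)(1/2 + 1/2) = 1/2`. -/

lemma basisVec_eq_single (q : ℕ) (u : Fin 4) : basisVec q u = Pi.single (fun _ => u) 1 := by
  funext x
  simp [basisVec, Pi.single_apply]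

lemma vecMulVec_basisVec_star_basisVec (q : ℕ) (u v : Fin 4) :
    vecMulVec (basisVec q u) (star (basisVec q v)) = single (fun _ => u) (fun _ => v) 1 := by
  simp [basisVec_eq_single, single_eq_single_vecMulVec_single]

lemma codeProj_apply_const_const (q : ℕ) (hq : 1 ≤ q) (u : Fin 4) :
    codeProj q (fun _ => u) (fun _ => u) = 1/2 := by
  have : Nonempty (Fin q) := ⟨⟨0, hq⟩⟩
  have const_inj (v w : Fin 4) : ((fun _ => v : Fin q → Fin 4) = fun _ => w) ↔ v = w :=
    Function.const_inj
  simp only [codeProj, vecMulVec_basisVec_star_basisVec, Matrix.smul_apply,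
    Matrix.add_apply, Matrix.sum_apply, single_apply, const_inj]
  fin_cases u <;> simp <;> decide

theorem trace_codeProj_mixedGHZ_general (q : ℕ) (hq : 1 ≤ q) (a : ℝ) :
    (codeProj q *
      (((a : ℂ)/2) • (vecMulVec (basisVec q 0) (star (basisVec q 0))
          + vecMulVec (basisVec q 1) (star (basisVec q 1)))
        + (((1 - a : ℝ) : ℂ)/2) • (vecMulVec (basisVec q 2) (star (basisVec q 2))
          + vecMulVec (basisVec q 3) (star (basisVec q 3))))).trace = 1/2 := by
  simp only [vecMulVec_basisVec_star_basisVec, Matrix.mul_add, Matrix.mul_smul, trace_add,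
    trace_smul, trace_mul_single, MulOpposite.op_one, one_smul, codeProj_apply_const_const q hq]
  push_cast
  ring

theorem trace_codeProj_mixedGHZ (q : ℕ) (hq : 1 ≤ q) (a : ℝ) (ha₀ : 0 ≤ a) (ha₁ : a ≤ 1) :
    (codeProj q *
      (((a : ℂ)/2) • (vecMulVec (basisVec q 0) (star (basisVec q 0))
          + vecMulVec (basisVec q 1) (star (basisVec q 1)))
        + (((1 - a : ℝ) : ℂ)/2) • (vecMulVec (basisVec q 2) (star (basisVec q 2))
          + vecMulVec (basisVec q 3) (star (basisVec q 3))))).trace = 1/2 :=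
  trace_codeProj_mixedGHZ_general q hq a
end

section
/- Let b : ℝ, and suppose that for every choice function f : Fin m → Fin l and every unit vector φ, the energy of φ with respect to Σ_{i : Fin m} H i (f i) is at least b * m. Then for every choice function f and every unit vector ψ: (1/m) * Σ_{i : Fin m} (1/2 + (1/2) * (1 - Re(star ψ ⬝ᵥ (H i (f i)).mulVec ψ))) ≤ 1 - b/2. (Soundness of the CRESP game against honest quantum strategies: if every selected Hamiltonian has groundstate energy at least b·m, then provers answering honestly are accepted with probability at most 1 - b/2.) -/
/-! The acceptance probability of an honest strategy is an affine function of the energy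
`Re ⟨ψ, (∑ i, H i (f i)) ψ⟩`, since energy is additive over the terms; the lower bound `b * m` on
that energy therefore turns directly into the upper bound `1 - b / 2`. -/

open Matrix
open scoped ComplexOrder

/-- A Hamiltonian term on `n` qubits: Hermitian and `0 ≤ H ≤ 1` in the
Loewner order. -/
def IsHamiltonianTerm {n : ℕ} (H : Matrix (Fin n → Fin 2) (Fin n → Fin 2) ℂ) : Prop :=
  H.IsHermitian ∧ H.PosSemidef ∧ (1 - H).PosSemidef

theorem Matrix.re_star_dotProduct_sum_mulVec {ι κ : Type*} [Fintype κ] (s : Finset ι)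
    (A : ι → Matrix κ κ ℂ) (ψ : κ → ℂ) :
    (star ψ ⬝ᵥ (∑ i ∈ s, A i) *ᵥ ψ).re = ∑ i ∈ s, (star ψ ⬝ᵥ A i *ᵥ ψ).re := by
  rw [sum_mulVec, dotProduct_sum, Complex.re_sum]

theorem mean_acceptance_le_of_mul_card_le_sum {ι : Type*} [Fintype ι] [Nonempty ι]
    (e : ι → ℝ) (b : ℝ) (he : b * Fintype.card ι ≤ ∑ i, e i) :
    (1 / (Fintype.card ι : ℝ)) * ∑ i, (1 / 2 + (1 / 2) * (1 - e i)) ≤ 1 - b / 2 := by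
  have hcard : (0 : ℝ) < Fintype.card ι := by exact_mod_cast Fintype.card_pos
  have hmean : (1 / (Fintype.card ι : ℝ)) * ∑ i, (1 / 2 + (1 / 2) * (1 - e i))
      = 1 - (∑ i, e i) / (2 * Fintype.card ι) := by
    simp only [Finset.sum_add_distrib, Finset.sum_const, ← Finset.mul_sum, Finset.sum_sub_distrib,
      Finset.card_univ, nsmul_eq_mul]
    field_simp
    ring
  rw [hmean, sub_le_sub_iff_left, le_div_iff₀ (by positivity)]
  linarith

theorem cresp_soundness_honest_general (n m l : ℕ) (hm : 1 ≤ m)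
    (H : Fin m → Fin l → Matrix (Fin n → Fin 2) (Fin n → Fin 2) ℂ)
    (b : ℝ)
    (hlow : ∀ (f : Fin m → Fin l) (φ : (Fin n → Fin 2) → ℂ), star φ ⬝ᵥ φ = 1 →
      (star φ ⬝ᵥ (∑ i : Fin m, H i (f i)).mulVec φ).re ≥ b * m) :
    ∀ (f : Fin m → Fin l) (ψ : (Fin n → Fin 2) → ℂ), star ψ ⬝ᵥ ψ = 1 →
      (1/(m : ℝ)) * ∑ i : Fin m,
          (1/2 + (1/2) * (1 - (star ψ ⬝ᵥ (H i (f i)).mulVec ψ).re))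
        ≤ 1 - b/2 := by
  intro f ψ hψ
  have : Nonempty (Fin m) := ⟨⟨0, hm⟩⟩
  have henergy : b * Fintype.card (Fin m) ≤ ∑ i, (star ψ ⬝ᵥ H i (f i) *ᵥ ψ).re := by
    simpa [re_star_dotProduct_sum_mulVec] using hlow f ψ hψ
  simpa using mean_acceptance_le_of_mul_card_le_sum _ b henergy

theorem cresp_soundness_honest (n m l : ℕ) (hm : 1 ≤ m) (hl : 1 ≤ l)
    (H : Fin m → Fin l → Matrix (Fin n → Fin 2) (Fin n → Fin 2) ℂ)
    (hH : ∀ i j, IsHamiltonianTerm (H i j))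
    (b : ℝ)
    (hlow : ∀ (f : Fin m → Fin l) (φ : (Fin n → Fin 2) → ℂ), star φ ⬝ᵥ φ = 1 →
      (star φ ⬝ᵥ (∑ i : Fin m, H i (f i)).mulVec φ).re ≥ b * m) :
    ∀ (f : Fin m → Fin l) (ψ : (Fin n → Fin 2) → ℂ), star ψ ⬝ᵥ ψ = 1 →
      (1/(m : ℝ)) * ∑ i : Fin m,
          (1/2 + (1/2) * (1 - (star ψ ⬝ᵥ (H i (f i)).mulVec ψ).re))
        ≤ 1 - b/2 :=
  cresp_soundness_honest_general n m l hm H b hlow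
end
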